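/- For each n ∈ ℕ let A_n be a symmetric (0,2)-tensor field on P_n, and assume that for every n ∈ ℕ and each scalar patched Markov embedding G_n : P_n → P_{n+1}, the pullback of A_{n+1} by G_n equals A_n, and that A_2 satisfies condition (C1). Set λ := (1/2)·A_1(Z_1^1, Z_1^1)_{p_{1/2}}, W_1 := Z_3^2 − Z_2^2, W_2 := Z_1^2 − Z_3^2, W_3 := Z_1^2 − Z_2^2. Then for every q ∈ P_2, A_2(W_3, W_2)_q = λ/q(1)² and A_2(W_3, W_1)_q = λ/q(2)². -/

import Mathlib

open Finset

noncomputable section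

/-- `Psim n` is the space `P_n` of positive probability measures on
`Ω_{n+1} = {1,…,n+1}`, viewed as a subset of `ℝ^{n+1}`. -/
def Psim (n : ℕ) : Set (Fin (n + 1) → ℝ) :=
  {p | (∀ i, p i ∈ Set.Ioo (0 : ℝ) 1) ∧ ∑ i, p i = 1}

/-- The tangent space of `P_n` (at any point): vectors in `ℝ^{n+1}` whose
coordinates sum to zero. -/
def Tang (n : ℕ) : Set (Fin (n + 1) → ℝ) :=
  {X | ∑ i, X i = 0}

/-- `B` is a symmetric bilinear form on `ℝ^{n+1}` (the value of a symmetric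
`(0,2)`-tensor field at a point). -/
def IsSymmBilin {n : ℕ} (B : (Fin (n + 1) → ℝ) → (Fin (n + 1) → ℝ) → ℝ) : Prop :=
  (∀ X Y, B X Y = B Y X) ∧
  (∀ (c : ℝ) (X X' Y : Fin (n + 1) → ℝ), B (c • X + X') Y = c * B X Y + B X' Y)

/-- `A` is a family of symmetric `(0,2)`-tensor fields `A_n` on `P_n`
(indices `n ≥ 1`, matching the paper's `ℕ = {1,2,…}`). -/
def SymmTF (A : (n : ℕ) → (Fin (n + 1) → ℝ) → (Fin (n + 1) → ℝ) → (Fin (n + 1) → ℝ) → ℝ) :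
    Prop :=
  ∀ n : ℕ, 0 < n → ∀ p ∈ Psim n, IsSymmBilin (A n p)

/-- The scalar patched Markov embedding `G_n^{α,σ} : P_n → P_{n+1}`,
`G_n^{α,σ}(p) = α ∑_{i ∈ Ω_{n+1}} p(i) δ_{σ(i)} + (1-α) δ_{σ(n+2)}`. -/
def sPatch (n : ℕ) (α : ℝ) (σ : Equiv.Perm (Fin (n + 2))) (p : Fin (n + 1) → ℝ) :
    Fin (n + 2) → ℝ := fun I =>
  α * ∑ i : Fin (n + 1), p i * (if σ i.castSucc = I then 1 else 0) +
    (1 - α) * (if σ (Fin.last (n + 1)) = I then 1 else 0)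

/-- The differential of `G_n^{α,σ}`: `dG(X) = α ∑_i X^i δ_{σ(i)}`. -/
def sPatchD (n : ℕ) (α : ℝ) (σ : Equiv.Perm (Fin (n + 2))) (X : Fin (n + 1) → ℝ) :
    Fin (n + 2) → ℝ := fun I =>
  α * ∑ i : Fin (n + 1), X i * (if σ i.castSucc = I then 1 else 0)

/-- A general patched Markov embedding `G_n : P_n → P_{n+1}` with weights `a_i`:
`G_n(p) = ∑_i p(i) (a_i δ_{σ(i)} + (1-a_i) δ_{σ(n+2)})`. -/
def patch (n : ℕ) (a : Fin (n + 1) → ℝ) (σ : Equiv.Perm (Fin (n + 2)))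
    (p : Fin (n + 1) → ℝ) : Fin (n + 2) → ℝ := fun I =>
  ∑ i : Fin (n + 1), p i * (a i * (if σ i.castSucc = I then 1 else 0) +
    (1 - a i) * (if σ (Fin.last (n + 1)) = I then 1 else 0))

/-- The differential of a patched Markov embedding. -/
def patchD (n : ℕ) (a : Fin (n + 1) → ℝ) (σ : Equiv.Perm (Fin (n + 2)))
    (X : Fin (n + 1) → ℝ) : Fin (n + 2) → ℝ := fun I =>
  ∑ i : Fin (n + 1), X i * (a i * (if σ i.castSucc = I then 1 else 0) +
    (1 - a i) * (if σ (Fin.last (n + 1)) = I then 1 else 0))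

/-- Invariance of the family `{A_n}` under scalar patched Markov embeddings:
the pullback of `A_{n+1}` by each `G_n^{α,σ}` equals `A_n`. -/
def InvariantSP
    (A : (n : ℕ) → (Fin (n + 1) → ℝ) → (Fin (n + 1) → ℝ) → (Fin (n + 1) → ℝ) → ℝ) : Prop :=
  ∀ n : ℕ, 0 < n → ∀ α ∈ Set.Ioo (0 : ℝ) 1, ∀ σ : Equiv.Perm (Fin (n + 2)),
    ∀ p ∈ Psim n, ∀ X ∈ Tang n, ∀ Y ∈ Tang n,
      A (n + 1) (sPatch n α σ p) (sPatchD n α σ X) (sPatchD n α σ Y) = A n p X Y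

/-- The vector field `Z_i^n` on `P_n`, with (constant) coordinates
`e_i - (1/(n+1)) ∑_j e_j`. -/
def Zvec (n : ℕ) (i : Fin (n + 1)) : Fin (n + 1) → ℝ :=
  fun k => (if k = i then 1 else 0) - 1 / (n + 1)

/-- The uniform probability measure `b_n ∈ P_n`. -/
def bunif (n : ℕ) : Fin (n + 1) → ℝ := fun _ => 1 / (n + 1)

/-- The point `p_u ∈ P_1`: `p_u(1) = u`, `p_u(2) = 1 - u`. -/
def pu (u : ℝ) : Fin 2 → ℝ := ![u, 1 - u]

/-- The tensor field `A_n^d(X,Y)_p = ∑_i X^i Y^i / p(i)²`. -/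
def Ad (n : ℕ) (p X Y : Fin (n + 1) → ℝ) : ℝ := ∑ i, X i * Y i / (p i) ^ 2

/-- The tensor field `A_n^s(X,Y)_p = (∑_i X^i/p(i)) (∑_j Y^j/p(j))`. -/
def As (n : ℕ) (p X Y : Fin (n + 1) → ℝ) : ℝ := (∑ i, X i / p i) * (∑ j, Y j / p j)

/-- The Fisher metric `g_n^F(X,Y)_p = ∑_i X^i Y^i / p(i)`. -/
def Fish (n : ℕ) (p X Y : Fin (n + 1) → ℝ) : ℝ := ∑ i, X i * Y i / p i

/-- The point `ψ_u^σ(α) = G_1^{α,σ}(p_u) ∈ P_2` (the indices `1,2,3` of `Ω_3`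
are `0,1,2 : Fin 3`). -/
def psiPt (α u : ℝ) (σ : Equiv.Perm (Fin 3)) : Fin 3 → ℝ := sPatch 1 α σ (pu u)

/-- `E^k ⊂ TP_2`: the line spanned by `Z_i^2 - Z_j^2 = e_i - e_j` where
`{i,j,k} = {0,1,2}`; equivalently, the sum-zero vectors vanishing at `k`. -/
def Esub (k : Fin 3) : Set (Fin 3 → ℝ) := {W | (∑ i, W i = 0) ∧ W k = 0}

/-- `u_α^{ij}` (formed with `σ = id`). -/
def uRatio (α u : ℝ) (i j : Fin 3) : ℝ :=
  psiPt α u (Equiv.refl (Fin 3)) i /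
    (psiPt α u (Equiv.refl (Fin 3)) i + psiPt α u (Equiv.refl (Fin 3)) j)

/-- The image `dH^{ij}_q(Z_1^1) = ((q(i)+q(j))/2) (Z_i^2 - Z_j^2)` of `Z_1^1`
under the differential of `H_q^{ij} : P_1 → P_2`. -/
def dHvec (q : Fin 3 → ℝ) (i j : Fin 3) : Fin 3 → ℝ :=
  ((q i + q j) / 2) • (Zvec 2 i - Zvec 2 j)

/-- Condition (C1) for `A_2`. -/
def CondC1 (A2 : (Fin 3 → ℝ) → (Fin 3 → ℝ) → (Fin 3 → ℝ) → ℝ) : Prop :=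
  ∃ r : ℝ → ℝ, (∀ t : ℝ, 0 < t → 0 < r t) ∧ (∀ t : ℝ, 0 < t → r t * r (1 / t) = 1) ∧
    ∀ α ∈ Set.Ioo (0 : ℝ) 1, ∀ u ∈ Set.Ioo (0 : ℝ) 1, ∀ σ : Equiv.Perm (Fin 3),
      ∀ W1 W2 W3 : Fin 3 → ℝ, W1 ∈ Esub (σ 0) → W2 ∈ Esub (σ 1) → W3 ∈ Esub (σ 2) →
        W3 = W1 + W2 →
        A2 (psiPt α u σ) W3 W1 = r (u / (1 - u)) * A2 (psiPt α u σ) W3 W2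

/-- Condition (C2) for `A_1` and `A_2`: `A_1` is positive semidefinite and
degenerate at `b_1`, and the parallelism identity holds. -/
def CondC2 (A1 : (Fin 2 → ℝ) → (Fin 2 → ℝ) → (Fin 2 → ℝ) → ℝ)
    (A2 : (Fin 3 → ℝ) → (Fin 3 → ℝ) → (Fin 3 → ℝ) → ℝ) : Prop :=
  (∀ p ∈ Psim 1, ∀ X ∈ Tang 1, 0 ≤ A1 p X X) ∧
  (∃ X ∈ Tang 1, X ≠ 0 ∧ ∀ Y ∈ Tang 1, A1 (bunif 1) X Y = 0) ∧
  (∀ α ∈ Set.Ioo (0 : ℝ) 1, ∀ u ∈ Set.Ioo (0 : ℝ) 1, ∀ σ : Equiv.Perm (Fin 3),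
    ∀ i j k l : Fin 3, i ≠ j → k ≠ l →
      A2 (psiPt α u σ) (dHvec (psiPt α u σ) (σ i) (σ j)) (dHvec (psiPt α u σ) (σ k) (σ l)) =
        (Real.sign (2 * uRatio α u i j - 1) *
            Real.sqrt (A1 (pu (uRatio α u i j)) (Zvec 1 0) (Zvec 1 0))) *
        (Real.sign (2 * uRatio α u k l - 1) *
            Real.sqrt (A1 (pu (uRatio α u k l)) (Zvec 1 0) (Zvec 1 0))))

/-- `H : P_m → P_n` (together with its linear differential `dH`) is a
composition of scalar patched Markov embeddings. -/
inductive IsSPMComp :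
    (m n : ℕ) → ((Fin (m + 1) → ℝ) → (Fin (n + 1) → ℝ)) →
      ((Fin (m + 1) → ℝ) → (Fin (n + 1) → ℝ)) → Prop
  | refl (m : ℕ) : IsSPMComp m m id id
  | step {m n : ℕ} {H dH : (Fin (m + 1) → ℝ) → (Fin (n + 1) → ℝ)} (α : ℝ)
      (hα : α ∈ Set.Ioo (0 : ℝ) 1) (σ : Equiv.Perm (Fin (n + 2)))
      (h : IsSPMComp m n H dH) :
      IsSPMComp m (n + 1) (fun p => sPatch n α σ (H p)) (fun X => sPatchD n α σ (dH X))

/-- `Q` is a Markov partition: each `Q i` is a probability measure on `Ω_{N+1}`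
and the supports of the `Q i` are pairwise disjoint with union `Ω_{N+1}`. -/
def IsMarkovPartition {n N : ℕ} (Q : Fin (n + 1) → Fin (N + 1) → ℝ) : Prop :=
  (∀ i, (∀ I, 0 ≤ Q i I) ∧ ∑ I, Q i I = 1) ∧ (∀ I, ∃! i, Q i I ≠ 0)

/-- The Markov embedding `F(p) = ∑_i p(i) Q_i` induced by `Q` (the same formula
gives its differential on tangent vectors). -/
def mEmb {n N : ℕ} (Q : Fin (n + 1) → Fin (N + 1) → ℝ) (p : Fin (n + 1) → ℝ) :
    Fin (N + 1) → ℝ := fun I => ∑ i, p i * Q i I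

/-- `A_n^{λ,μ} = λ A_n^d + μ A_n^s`. -/
def Alm (n : ℕ) (lam mu : ℝ) (p X Y : Fin (n + 1) → ℝ) : ℝ :=
  lam * Ad n p X Y + mu * As n p X Y

/-!
Write `q ∈ P_2` as `ψ_u^σ(α)` with `α = q(σ 0) + q(σ 1)`, `u = q(σ 0) / α`, and let
`W = e_{σ 0} - e_{σ 1} = (e_{σ 2} - e_{σ 1}) + (e_{σ 0} - e_{σ 2})`. Invariance under
`G_1^{α,σ}`, whose differential sends `Z_1^1` to `(α/2) W`, gives
`(α/2)² A_2(W, W)_q = A_1(Z_1^1, Z_1^1)_{p_u}`, and (C1) splits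
`A_2(W, W)_q = (1 + r(u/(1-u))) A_2(W, e_{σ 0} - e_{σ 2})_q`. Hence
`q(σ 0)² A_2(e_{σ 0} - e_{σ 1}, e_{σ 0} - e_{σ 2})_q = Φ(u)` with `Φ = offDiagProfile A_1 r`
depending on `u` alone. Computing `A_2(e_0 - e_1, e_0 - e_2)_q` with `σ = id` and with
`σ = (1 2)` at a point where `q 0 = q 2` gives `Φ(u) = Φ(1/2)`, and `Φ(1/2) = λ` since
`r(1) = 1`. The second identity is the case `σ = (0 1)`, both arguments negated.
-/

namespace IsSymmBilin

variable {n : ℕ} {B : (Fin (n + 1) → ℝ) → (Fin (n + 1) → ℝ) → ℝ}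

theorem zero_left (hB : IsSymmBilin B) (Y : Fin (n + 1) → ℝ) : B 0 Y = 0 := by
  have h := hB.2 1 0 0 Y
  simp only [smul_zero, add_zero, one_mul] at h
  linarith

theorem smul_left (hB : IsSymmBilin B) (c : ℝ) (X Y : Fin (n + 1) → ℝ) :
    B (c • X) Y = c * B X Y := by
  simpa only [add_zero, hB.zero_left] using hB.2 c X 0 Y

theorem add_right (hB : IsSymmBilin B) (X Y Y' : Fin (n + 1) → ℝ) :
    B X (Y + Y') = B X Y + B X Y' := by
  rw [hB.1, hB.1 X Y, hB.1 X Y']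
  simpa only [one_smul, one_mul] using hB.2 1 Y Y' X

theorem neg_neg (hB : IsSymmBilin B) (X Y : Fin (n + 1) → ℝ) : B (-X) (-Y) = B X Y := by
  rw [← neg_one_smul ℝ X, ← neg_one_smul ℝ Y, hB.smul_left, hB.1, hB.smul_left, hB.1]
  ring

end IsSymmBilin

theorem Zvec_mem_Tang (n : ℕ) (i : Fin (n + 1)) : Zvec n i ∈ Tang n := by
  have hn : (n + 1 : ℝ) ≠ 0 := Nat.cast_add_one_ne_zero n
  simp [Tang, Zvec, Finset.sum_sub_distrib, mul_inv_cancel₀ hn]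

theorem Zvec_sub_Zvec_mem_Esub {i j k : Fin 3} (hi : k ≠ i) (hj : k ≠ j) :
    Zvec 2 i - Zvec 2 j ∈ Esub k := by
  refine ⟨?_, by simp [Zvec, hi, hj]⟩
  simp [Zvec, Finset.sum_sub_distrib]

theorem pu_mem_Psim {u : ℝ} (hu : u ∈ Set.Ioo (0 : ℝ) 1) : pu u ∈ Psim 1 := by
  refine ⟨fun i => ?_, by simp [pu]⟩
  fin_cases i <;> simp [pu] <;> constructor <;> linarith [hu.1, hu.2]

theorem psiPt_apply_perm (α u : ℝ) (σ : Equiv.Perm (Fin 3)) (k : Fin 3) :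
    psiPt α u σ (σ k) = ![α * u, α * (1 - u), 1 - α] k := by
  fin_cases k <;> simp [psiPt, sPatch, pu, Fin.sum_univ_two, σ.injective.eq_iff]

theorem sPatchD_one_Zvec (α : ℝ) (σ : Equiv.Perm (Fin 3)) :
    sPatchD 1 α σ (Zvec 1 0) = (α / 2) • (Zvec 2 (σ 0) - Zvec 2 (σ 1)) := by
  ext I
  obtain ⟨k, rfl⟩ := σ.surjective I
  fin_cases k <;> simp [sPatchD, Zvec, Fin.sum_univ_two, σ.injective.eq_iff] <;> ring

theorem sum_perm_three_eq_one {q : Fin 3 → ℝ} (hq : q ∈ Psim 2) (σ : Equiv.Perm (Fin 3)) :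
    q (σ 0) + q (σ 1) + q (σ 2) = 1 := by
  rw [← hq.2, ← Equiv.sum_comp σ q, Fin.sum_univ_three]

theorem div_add_mem_Ioo {a b : ℝ} (ha : 0 < a) (hb : 0 < b) :
    a / (a + b) ∈ Set.Ioo (0 : ℝ) 1 :=
  ⟨by positivity, (div_lt_one (by positivity)).2 (by linarith)⟩

theorem psiPt_eq_of_mem_Psim {q : Fin 3 → ℝ} (hq : q ∈ Psim 2) (σ : Equiv.Perm (Fin 3)) :
    psiPt (q (σ 0) + q (σ 1)) (q (σ 0) / (q (σ 0) + q (σ 1))) σ = q := by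
  have hα : q (σ 0) + q (σ 1) ≠ 0 := (add_pos (hq.1 _).1 (hq.1 _).1).ne'
  have hsum := sum_perm_three_eq_one hq σ
  ext I
  obtain ⟨k, rfl⟩ := σ.surjective I
  rw [psiPt_apply_perm]
  fin_cases k <;> simp <;> field_simp <;> linarith

/-- The last clause of `CondC1`, for a fixed ratio function `r`. -/
def C1Ratio (A2 : (Fin 3 → ℝ) → (Fin 3 → ℝ) → (Fin 3 → ℝ) → ℝ) (r : ℝ → ℝ) : Prop :=
  ∀ α ∈ Set.Ioo (0 : ℝ) 1, ∀ u ∈ Set.Ioo (0 : ℝ) 1, ∀ σ : Equiv.Perm (Fin 3),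
    ∀ W1 W2 W3 : Fin 3 → ℝ, W1 ∈ Esub (σ 0) → W2 ∈ Esub (σ 1) → W3 ∈ Esub (σ 2) →
      W3 = W1 + W2 →
      A2 (psiPt α u σ) W3 W1 = r (u / (1 - u)) * A2 (psiPt α u σ) W3 W2

def offDiagProfile (A1 : (Fin 2 → ℝ) → (Fin 2 → ℝ) → (Fin 2 → ℝ) → ℝ) (r : ℝ → ℝ) (u : ℝ) :
    ℝ :=
  4 * u ^ 2 * A1 (pu u) (Zvec 1 0) (Zvec 1 0) / (1 + r (u / (1 - u)))

section Invariant

variable {A : (n : ℕ) → (Fin (n + 1) → ℝ) → (Fin (n + 1) → ℝ) → (Fin (n + 1) → ℝ) → ℝ}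

theorem sq_mul_A_two_Zvec_sub_self (hsymm : SymmTF A) (hinv : InvariantSP A)
    {α u : ℝ} (hα : α ∈ Set.Ioo (0 : ℝ) 1) (hu : u ∈ Set.Ioo (0 : ℝ) 1)
    {σ : Equiv.Perm (Fin 3)} {q : Fin 3 → ℝ} (hq : q ∈ Psim 2) (hψ : psiPt α u σ = q) :
    (α / 2) ^ 2 * A 2 q (Zvec 2 (σ 0) - Zvec 2 (σ 1)) (Zvec 2 (σ 0) - Zvec 2 (σ 1)) =
      A 1 (pu u) (Zvec 1 0) (Zvec 1 0) := by
  have hB := hsymm 2 two_pos q hq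
  have h := hinv 1 one_pos α hα σ (pu u) (pu_mem_Psim hu) _ (Zvec_mem_Tang 1 0) _
    (Zvec_mem_Tang 1 0)
  rw [show sPatch 1 α σ (pu u) = q from hψ, sPatchD_one_Zvec, hB.smul_left, hB.1,
    hB.smul_left] at h
  rw [← h]
  ring

theorem A_two_Zvec_sub_mul_sq (hsymm : SymmTF A) (hinv : InvariantSP A) {r : ℝ → ℝ}
    (hrpos : ∀ t : ℝ, 0 < t → 0 < r t) (hr : C1Ratio (A 2) r)
    {q : Fin 3 → ℝ} (hq : q ∈ Psim 2) (σ : Equiv.Perm (Fin 3)) :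
    A 2 q (Zvec 2 (σ 0) - Zvec 2 (σ 1)) (Zvec 2 (σ 0) - Zvec 2 (σ 2)) * q (σ 0) ^ 2 =
      offDiagProfile (A 1) r (q (σ 0) / (q (σ 0) + q (σ 1))) := by
  have hpos : ∀ i, 0 < q i := fun i => (hq.1 i).1
  set α := q (σ 0) + q (σ 1)
  set u := q (σ 0) / α
  have hα : α ∈ Set.Ioo (0 : ℝ) 1 :=
    ⟨add_pos (hpos _) (hpos _), by linarith [sum_perm_three_eq_one hq σ, hpos (σ 2)]⟩
  have hu : u ∈ Set.Ioo (0 : ℝ) 1 := div_add_mem_Ioo (hpos _) (hpos _)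
  have hψ : psiPt α u σ = q := psiPt_eq_of_mem_Psim hq σ
  have hB := hsymm 2 two_pos q hq
  have hne : ∀ {a b : Fin 3}, a ≠ b → σ a ≠ σ b := σ.injective.ne
  have hdiag := sq_mul_A_two_Zvec_sub_self hsymm hinv hα hu hq hψ
  have hsplit : Zvec 2 (σ 0) - Zvec 2 (σ 1) =
      (Zvec 2 (σ 2) - Zvec 2 (σ 1)) + (Zvec 2 (σ 0) - Zvec 2 (σ 2)) := by abel
  have hratio := hr α hα u hu σ _ _ _
    (Zvec_sub_Zvec_mem_Esub (hne (by decide)) (hne (by decide)))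
    (Zvec_sub_Zvec_mem_Esub (hne (by decide)) (hne (by decide)))
    (Zvec_sub_Zvec_mem_Esub (hne (by decide)) (hne (by decide))) hsplit
  have hadd : A 2 q (Zvec 2 (σ 0) - Zvec 2 (σ 1)) (Zvec 2 (σ 0) - Zvec 2 (σ 1)) =
      A 2 q (Zvec 2 (σ 0) - Zvec 2 (σ 1)) (Zvec 2 (σ 2) - Zvec 2 (σ 1)) +
        A 2 q (Zvec 2 (σ 0) - Zvec 2 (σ 1)) (Zvec 2 (σ 0) - Zvec 2 (σ 2)) := by
    rw [← hB.add_right, ← hsplit]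
  rw [hψ] at hratio
  have hq0 : q (σ 0) = α * u := (mul_div_cancel₀ _ hα.1.ne').symm
  have hr1 : 1 + r (u / (1 - u)) ≠ 0 := by
    have := hrpos (u / (1 - u)) (div_pos hu.1 (by linarith [hu.2])); positivity
  rw [offDiagProfile, eq_div_iff hr1, hq0]
  linear_combination 4 * u ^ 2 * hdiag - α ^ 2 * u ^ 2 * (hratio + hadd)

theorem offDiagProfile_eq_half (hsymm : SymmTF A) (hinv : InvariantSP A) {r : ℝ → ℝ}
    (hrpos : ∀ t : ℝ, 0 < t → 0 < r t) (hr : C1Ratio (A 2) r)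
    {u : ℝ} (hu : u ∈ Set.Ioo (0 : ℝ) 1) :
    offDiagProfile (A 1) r u = offDiagProfile (A 1) r (1 / 2) := by
  have hu1 : 0 < 1 + u := by linarith [hu.1]
  set q : Fin 3 → ℝ := ![u / (1 + u), (1 - u) / (1 + u), u / (1 + u)]
  have hq : q ∈ Psim 2 := by
    refine ⟨fun i => ?_, ?_⟩
    · have : 1 - u < 1 + u := by linarith [hu.1]
      fin_cases i <;> simp [q, div_lt_one hu1, hu.1, hu.2, hu1, this]
    · show ∑ i : Fin 3, q i = 1
      simp [q, Fin.sum_univ_three]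
      field_simp
      ring
  have hB := hsymm 2 two_pos q hq
  have h01 := A_two_Zvec_sub_mul_sq hsymm hinv hrpos hr hq 1
  have h02 := A_two_Zvec_sub_mul_sq hsymm hinv hrpos hr hq (Equiv.swap 1 2)
  simp only [Equiv.Perm.one_apply, Equiv.swap_apply_left, Equiv.swap_apply_right,
    Equiv.swap_apply_of_ne_of_ne (by decide : (0 : Fin 3) ≠ 1) (by decide : (0 : Fin 3) ≠ 2)]
    at h01 h02
  have hu0 : u ≠ 0 := hu.1.ne'
  have hu' : q 0 / (q 0 + q 1) = u := by simp [q]; field_simp; ring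
  have hhalf : q 0 / (q 0 + q 2) = 1 / 2 := by simp [q]; field_simp; ring
  rw [← hu', ← hhalf, ← h01, ← h02, hB.1]

end Invariant

theorem apply_one_eq_one_of_mul_apply_one_div {r : ℝ → ℝ} (hrpos : ∀ t : ℝ, 0 < t → 0 < r t)
    (hrinv : ∀ t : ℝ, 0 < t → r t * r (1 / t) = 1) : r 1 = 1 := by
  have h := hrinv 1 one_pos
  rw [div_one] at h
  nlinarith [hrpos 1 one_pos]

theorem offDiagProfile_half (A1 : (Fin 2 → ℝ) → (Fin 2 → ℝ) → (Fin 2 → ℝ) → ℝ) {r : ℝ → ℝ}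
    (hr1 : r 1 = 1) :
    offDiagProfile A1 r (1 / 2) = A1 (pu (1 / 2)) (Zvec 1 0) (Zvec 1 0) / 2 := by
  rw [offDiagProfile, show (1 / 2 : ℝ) / (1 - 1 / 2) = 1 by norm_num, hr1]
  ring

/-- Under invariance and condition (C1), with `λ = (1/2) A_1(Z_1^1,Z_1^1)_{p_{1/2}}`
and `W_1 = Z_3^2 - Z_2^2`, `W_2 = Z_1^2 - Z_3^2`, `W_3 = Z_1^2 - Z_2^2`:
`A_2(W_3, W_2)_q = λ/q(1)²` and `A_2(W_3, W_1)_q = λ/q(2)²` for all `q ∈ P_2`. -/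
theorem A2_formula_C1
    (A : (n : ℕ) → (Fin (n + 1) → ℝ) → (Fin (n + 1) → ℝ) → (Fin (n + 1) → ℝ) → ℝ)
    (hsymm : SymmTF A) (hinv : InvariantSP A) (hC1 : CondC1 (A 2))
    (lam : ℝ) (hlam : lam = A 1 (pu (1 / 2)) (Zvec 1 0) (Zvec 1 0) / 2) :
    ∀ q ∈ Psim 2,
      A 2 q (Zvec 2 0 - Zvec 2 1) (Zvec 2 0 - Zvec 2 2) = lam / (q 0) ^ 2 ∧
      A 2 q (Zvec 2 0 - Zvec 2 1) (Zvec 2 2 - Zvec 2 1) = lam / (q 1) ^ 2 := by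
  obtain ⟨r, hrpos, hrinv, hr⟩ := hC1
  have hprofile : ∀ u ∈ Set.Ioo (0 : ℝ) 1, offDiagProfile (A 1) r u = lam := fun u hu => by
    rw [offDiagProfile_eq_half hsymm hinv hrpos hr hu,
      offDiagProfile_half _ (apply_one_eq_one_of_mul_apply_one_div hrpos hrinv), hlam]
  intro q hq
  have hpos : ∀ i, 0 < q i := fun i => (hq.1 i).1
  have h01 := A_two_Zvec_sub_mul_sq hsymm hinv hrpos hr hq 1
  have h10 := A_two_Zvec_sub_mul_sq hsymm hinv hrpos hr hq (Equiv.swap 0 1)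
  simp only [Equiv.Perm.one_apply, Equiv.swap_apply_left, Equiv.swap_apply_right,
    Equiv.swap_apply_of_ne_of_ne (by decide : (2 : Fin 3) ≠ 0) (by decide : (2 : Fin 3) ≠ 1)]
    at h01 h10
  rw [hprofile _ (div_add_mem_Ioo (hpos 0) (hpos 1))] at h01
  rw [hprofile _ (div_add_mem_Ioo (hpos 1) (hpos 0)), ← (hsymm 2 two_pos q hq).neg_neg,
    neg_sub, neg_sub] at h10
  exact ⟨eq_div_of_mul_eq (pow_ne_zero 2 (hpos 0).ne') h01,
    eq_div_of_mul_eq (pow_ne_zero 2 (hpos 1).ne') h10⟩
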